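/- arXiv:1111.1471 — 3 statements merged into one kernel-verified Lean document; each statement's English description precedes it below -/
import Mathlib

section
/- For every integer N ≥ 1, the sequence l satisfies the exact formula l_N = ∑_{k=2}^{N} binom(N,k) (-1)^k Q_{k-2} ∑_{n=1}^{k-2} (1 - (n+1)·2^{-n} - n(n+1)/4)/Q_n. (For N ≥ 1 this gives the average number of 2-protected nodes in a random digital search tree built from N data.) -/
open Finset

noncomputable def Q (m : ℕ) : ℝ := ∏ k ∈ Finset.Icc 1 m, (1 - (2:ℝ) ^ (-(k:ℤ)))

/-!
The right-hand side is the binomial transform `∑ₖ C(N,k) aₖ` of the sequence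
`aₖ = (-1)^k Q_{k-2} ∑_{n=1}^{k-2} c_n / Q_n`. Binomial transforms turn the shift `l_{n+1}` into
`aₖ + aₖ₊₁` and the inner sum `∑ₖ C(n,k) l_k` into `∑ₖ C(n,k) 2^{n-k} aₖ`, so the recurrence holds
for the transform once `aₖ + aₖ₊₁ - 2^{1-k} aₖ = (-1)^{k+1} c_{k-1}`, which is how `Q` telescopes,
and `∑ₖ C(n,k) (-1)^{k+1} c_{k-1} = 1 - n 2^{1-n}`, which follows from
`∑ₖ C(n,k) C(k,j) x^k = C(n,j) x^j (1+x)^{n-j}` for `j ≤ 2`. Equal initial values then force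
`l` to be the transform.
-/

theorem sum_range_choose_mul_choose_mul_pow {R : Type*} [CommSemiring R] (n j : ℕ) (x : R) :
    ∑ k ∈ range (n + 1), (n.choose k * k.choose j : R) * x ^ k =
      n.choose j * x ^ j * (1 + x) ^ (n - j) := by
  by_cases hjn : j ≤ n
  · rw [← sum_range_add_sum_Ico _ (show j ≤ n + 1 by omega), sum_Ico_eq_sum_range,
      sum_eq_zero fun k hk => by simp [Nat.choose_eq_zero_of_lt (mem_range.mp hk)], zero_add,
      show n + 1 - j = n - j + 1 by omega, add_comm 1 x, add_pow, mul_sum]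
    refine sum_congr rfl fun i _ => ?_
    have hchoose := Nat.choose_mul (n := n) (Nat.le_add_right j i)
    rw [Nat.add_sub_cancel_left] at hchoose
    rw [← Nat.cast_mul, hchoose, pow_add]
    push_cast
    ring
  · rw [Nat.choose_eq_zero_of_lt (not_le.mp hjn)]
    simp only [Nat.cast_zero, zero_mul]
    exact sum_eq_zero fun k hk => by
      simp [Nat.choose_eq_zero_of_lt ((Nat.lt_succ_iff.mp (mem_range.mp hk)).trans_lt
        (not_le.mp hjn))]

def binomialTransform {R : Type*} [Semiring R] (a : ℕ → R) (n : ℕ) : R :=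
  ∑ k ∈ range (n + 1), (n.choose k : R) * a k

section
variable {R : Type*} [Semiring R]

theorem binomialTransform_succ (a : ℕ → R) (n : ℕ) :
    binomialTransform a (n + 1) = binomialTransform (fun k => a k + a (k + 1)) n := by
  have hshift : ∑ k ∈ range (n + 1), (n.choose (k + 1) : R) * a (k + 1) + a 0 =
      ∑ k ∈ range (n + 1), (n.choose k : R) * a k := by
    simpa [sum_range_succ, Nat.choose_succ_self] using
      (sum_range_succ' (fun k => (n.choose k : R) * a k) (n + 1)).symm
  simp only [binomialTransform, mul_add, sum_add_distrib]
  rw [sum_range_succ', Nat.choose_zero_right, Nat.cast_one, one_mul]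
  simp only [Nat.choose_succ_succ', Nat.cast_add, add_mul, sum_add_distrib]
  rw [add_assoc, hshift, add_comm]

theorem binomialTransform_binomialTransform (a : ℕ → R) (n : ℕ) :
    binomialTransform (binomialTransform a) n =
      ∑ j ∈ range (n + 1), (n.choose j : R) * 2 ^ (n - j) * a j := by
  have hextend : ∀ k ∈ range (n + 1), (n.choose k : R) * binomialTransform a k =
      ∑ j ∈ range (n + 1), (n.choose k : R) * (k.choose j * a j) := by
    intro k hk
    rw [binomialTransform, mul_sum]
    apply sum_subset (range_subset_range.mpr (by simpa using hk))
    intro j _ hj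
    simp [Nat.choose_eq_zero_of_lt (by simpa using hj : k < j)]
  rw [binomialTransform, sum_congr rfl hextend, sum_comm]
  refine sum_congr rfl fun j _ => ?_
  have hrow := sum_range_choose_mul_choose_mul_pow n j (1 : ℕ)
  simp only [one_pow, mul_one] at hrow
  simp only [← mul_assoc, ← sum_mul]
  exact_mod_cast congrArg (fun m : ℕ => (m : R) * a j) hrow

theorem eq_of_binomialTransform_recurrence {u v : ℕ → R} (m : ℕ) (G : ℕ → R → R)
    (hinit : ∀ k ≤ m, u k = v k)
    (hu : ∀ n, m ≤ n → u (n + 1) = G n (binomialTransform u n))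
    (hv : ∀ n, m ≤ n → v (n + 1) = G n (binomialTransform v n)) : u = v := by
  funext N
  induction N using Nat.strong_induction_on with
  | _ N ih =>
    rcases le_or_gt N m with hN | hN
    · exact hinit N hN
    · obtain ⟨n, rfl⟩ : ∃ n, N = n + 1 := ⟨N - 1, by omega⟩
      rw [hu n (by omega), hv n (by omega), binomialTransform, binomialTransform,
        sum_congr rfl fun k hk => by rw [ih k (mem_range.mp hk)]]

end

theorem two_zpow_neg (n : ℕ) : (2:ℝ) ^ (-(n:ℤ)) = 2⁻¹ ^ n := by
  rw [zpow_neg, zpow_natCast, inv_pow]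

theorem two_zpow_one_sub (n : ℕ) : (2:ℝ) ^ (1 - (n:ℤ)) = 2 * 2⁻¹ ^ n := by
  rw [zpow_sub₀ two_ne_zero, zpow_one, zpow_natCast, div_eq_mul_inv, inv_pow]

theorem Q_succ (m : ℕ) : Q (m + 1) = Q m * (1 - 2⁻¹ ^ (m + 1)) := by
  rw [Q, Q, prod_Icc_succ_top (by omega), two_zpow_neg]

theorem Q_pos (m : ℕ) : 0 < Q m :=
  prod_pos fun k hk => by
    rw [two_zpow_neg, sub_pos]
    exact pow_lt_one₀ (by norm_num) (by norm_num) (by grind)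

namespace TwoProtected

noncomputable def c (n : ℕ) : ℝ :=
  1 - ((n : ℝ) + 1) * (2 : ℝ) ^ (-(n : ℤ)) - (n : ℝ) * ((n : ℝ) + 1) / 4

noncomputable def coeff (k : ℕ) : ℝ := (-1) ^ k * Q (k - 2) * ∑ n ∈ Icc 1 (k - 2), c n / Q n

theorem coeff_zero : coeff 0 = 0 := by simp [coeff]
theorem coeff_one : coeff 1 = 0 := by simp [coeff]
theorem coeff_two : coeff 2 = 0 := by simp [coeff]
theorem coeff_three : coeff 3 = 1 / 2 := by norm_num [coeff, c, Q]

theorem coeff_add_coeff_succ (k : ℕ) :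
    coeff k + coeff (k + 1) = 2 * 2⁻¹ ^ k * coeff k + (-1) ^ (k + 1) * c (k - 1) := by
  match k with
  | 0 => simp [coeff_zero, coeff_one, c]
  | 1 => simp [coeff_one, coeff_two, c]
  | m + 2 =>
    have hQ : Q (m + 1) ≠ 0 := (Q_pos _).ne'
    have hsucc : coeff (m + 2 + 1) =
        (-1) ^ (m + 3) * (Q (m + 1) * ∑ n ∈ Icc 1 m, c n / Q n + c (m + 1)) := by
      rw [coeff, show m + 2 + 1 - 2 = m + 1 from rfl, sum_Icc_succ_top (by omega), mul_assoc,
        mul_add, mul_div_cancel₀ _ hQ]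
    rw [hsucc, coeff, Q_succ, show m + 2 - 2 = m from rfl, show m + 2 - 1 = m + 1 from rfl]
    ring

/-- `0 ^ k` accounts for `k = 0`, where `c (k - 1) = c 0 = 0`. -/
theorem neg_one_pow_succ_mul_c_pred (k : ℕ) :
    (-1) ^ (k + 1) * c (k - 1) =
      0 ^ k - (-1) ^ k + 2 * (k * (-2⁻¹) ^ k) + 2⁻¹ * (k.choose 2 * (-1) ^ k) := by
  rcases k with _ | m
  · simp [c]
  · rw [Nat.cast_choose_two, Nat.add_sub_cancel, c, two_zpow_neg, neg_pow (2⁻¹ : ℝ)]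
    push_cast
    ring

theorem sum_choose_mul_neg_one_pow_succ_mul_c_pred (n : ℕ) (hn : 3 ≤ n) :
    ∑ k ∈ range (n + 1), (n.choose k : ℝ) * ((-1) ^ (k + 1) * c (k - 1)) =
      1 - n * (2 * 2⁻¹ ^ n) := by
  have hzero := sum_range_choose_mul_choose_mul_pow n 0 (0 : ℝ)
  have hsign := sum_range_choose_mul_choose_mul_pow n 0 (-1 : ℝ)
  have hlin := sum_range_choose_mul_choose_mul_pow n 1 (-2⁻¹ : ℝ)
  have hquad := sum_range_choose_mul_choose_mul_pow n 2 (-1 : ℝ)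
  simp only [Nat.choose_zero_right, Nat.choose_one_right, Nat.cast_one, mul_one]
    at hzero hsign hlin hquad
  simp only [neg_one_pow_succ_mul_c_pred, mul_add, mul_sub, sum_add_distrib, sum_sub_distrib,
    mul_left_comm _ (2 : ℝ), mul_left_comm _ (2⁻¹ : ℝ)]
  rw [← mul_sum, ← mul_sum]
  simp only [← mul_assoc]
  rw [hzero, hsign, hlin, hquad]
  obtain ⟨m, rfl⟩ : ∃ m, n = m + 3 := ⟨n - 3, by omega⟩
  simp only [show m + 3 - 1 = m + 2 from rfl, show m + 3 - 2 = m + 1 from rfl, Nat.sub_zero]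
  push_cast
  ring

theorem binomialTransform_coeff_succ (n : ℕ) (hn : 3 ≤ n) :
    binomialTransform coeff (n + 1) =
      1 + (2:ℝ) ^ (1 - (n:ℤ)) * binomialTransform (binomialTransform coeff) n
        - n * (2:ℝ) ^ (1 - (n:ℤ)) := by
  have hsum := sum_choose_mul_neg_one_pow_succ_mul_c_pred n hn
  rw [binomialTransform_succ, binomialTransform_binomialTransform, two_zpow_one_sub, mul_sum]
  simp only [binomialTransform, coeff_add_coeff_succ, mul_add, sum_add_distrib, hsum]
  have hterm : ∀ j ∈ range (n + 1), (n.choose j : ℝ) * (2 * 2⁻¹ ^ j * coeff j) =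
      2 * 2⁻¹ ^ n * ((n.choose j : ℝ) * 2 ^ (n - j) * coeff j) := by
    intro j hj
    have hpow : (2 : ℝ)⁻¹ ^ n * 2 ^ (n - j) = 2⁻¹ ^ j := by
      rw [pow_sub₀ _ two_ne_zero (by simpa [Nat.lt_succ_iff] using hj), inv_pow, inv_pow]
      field_simp
    linear_combination (-2 * (n.choose j : ℝ) * coeff j) * hpow
  rw [sum_congr rfl hterm]
  ring

theorem binomialTransform_coeff (N : ℕ) :
    binomialTransform coeff N =
      ∑ k ∈ Icc 2 N, (N.choose k : ℝ) * (-1) ^ k * Q (k - 2) * ∑ n ∈ Icc 1 (k - 2), c n / Q n := by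
  rw [binomialTransform, eq_comm]
  calc _ = ∑ k ∈ Icc 2 N, (N.choose k : ℝ) * coeff k :=
        sum_congr rfl fun k _ => by rw [coeff]; ring
    _ = _ := by
      refine sum_subset (fun k hk => by grind) fun k _ hk => ?_
      obtain rfl | rfl : k = 0 ∨ k = 1 := by grind
      · rw [coeff_zero, mul_zero]
      · rw [coeff_one, mul_zero]

end TwoProtected

/-- For every `N ≥ 1`, the average number `l N` of 2-protected nodes in a random
digital search tree of size `N` is given by the exact formula
`l N = ∑_{k=2}^N C(N,k) (-1)^k Q_{k-2} ∑_{n=1}^{k-2} (1-(n+1)2^{-n}-n(n+1)/4)/Q_n`. -/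
theorem dst_two_protected_exact
    (l : ℕ → ℝ)
    (h0 : l 0 = 0) (h1 : l 1 = 0) (h2 : l 2 = 0) (h3 : l 3 = 1/2)
    (hrec : ∀ n : ℕ, 3 ≤ n →
      l (n+1) = 1 + (2:ℝ) ^ (1 - (n:ℤ)) * ∑ k ∈ Finset.range (n+1), (n.choose k : ℝ) * l k
        - (n : ℝ) * (2:ℝ) ^ (1 - (n:ℤ))) :
    ∀ N : ℕ, 1 ≤ N →
      l N = ∑ k ∈ Finset.Icc 2 N, (N.choose k : ℝ) * (-1)^k * Q (k-2) *
        ∑ n ∈ Finset.Icc 1 (k-2),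
          (1 - ((n:ℝ)+1) * (2:ℝ) ^ (-(n:ℤ)) - (n:ℝ) * ((n:ℝ)+1) / 4) / Q n := by
  open TwoProtected in
  have hl : l = binomialTransform coeff := by
    refine eq_of_binomialTransform_recurrence 3
      (fun n s => 1 + (2:ℝ) ^ (1 - (n:ℤ)) * s - n * (2:ℝ) ^ (1 - (n:ℤ))) ?_ hrec
      binomialTransform_coeff_succ
    intro k hk
    interval_cases k <;> simp [binomialTransform, sum_range_succ, coeff_zero, coeff_one,
      coeff_two, coeff_three, h0, h1, h2, h3]
  intro N _
  rw [hl]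
  exact TwoProtected.binomialTransform_coeff N
end

section
/- The exponential generating function L(z) = ∑_{n≥0} l_n z^n/n! converges for every complex z, and the resulting entire function satisfies the difference-differential equation L'(z) = e^z − z·e^{z/2} − 1 + z²/4 + 2·e^{z/2}·L(z/2) for all z ∈ ℂ. -/
/-!
Summing the recurrence against `zⁿ/n!` turns its three ingredients into known series:
the constant `1` gives `eᶻ`, the term `n·2^{1-n}` gives `z e^{z/2}`, and
`2^{1-n} ∑ binom(n,k) l_k` is twice the binomial convolution of `(l_k)` with `(1)` evaluated
at `z/2`, i.e. `2 e^{z/2} L(z/2)`; the three initial values that do not follow the recurrence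
contribute the polynomial `-1 + z²/4`. The left side `∑ l_{n+1} zⁿ/n!` is `L'(z)` by termwise
differentiation, legitimate because `|l_n| ≤ 4ⁿ` makes the series converge locally uniformly.
-/

open Finset
open scoped Nat

noncomputable def egf (a : ℕ → ℂ) (z : ℂ) : ℂ := ∑' n, a n * z ^ n / n !

section egf

variable {a b : ℕ → ℂ} {C R : ℝ}

theorem summable_norm_egf_of_norm_le (ha : ∀ n, ‖a n‖ ≤ C * R ^ n) (z : ℂ) :
    Summable fun n => ‖a n * z ^ n / (n ! : ℂ)‖ := by
  refine .of_nonneg_of_le (fun _ => norm_nonneg _) (fun n => ?_)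
    ((Real.summable_pow_div_factorial (R * ‖z‖)).mul_left C)
  rw [norm_div, norm_mul, norm_pow, Complex.norm_natCast, mul_pow, ← mul_div_assoc, ← mul_assoc]
  gcongr
  exact ha n

theorem hasSum_egf (ha : ∀ n, ‖a n‖ ≤ C * R ^ n) (z : ℂ) :
    HasSum (fun n => a n * z ^ n / n !) (egf a z) :=
  (summable_norm_egf_of_norm_le ha z).of_norm.hasSum

theorem Complex.hasSum_exp (z : ℂ) : HasSum (fun n => z ^ n / n !) (Complex.exp z) := by
  rw [Complex.exp_eq_exp_ℂ]
  exact NormedSpace.expSeries_div_hasSum_exp z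

theorem hasSum_nat_mul_pow_div_factorial (z : ℂ) :
    HasSum (fun n => n * z ^ n / n !) (z * Complex.exp z) := by
  refine (hasSum_nat_add_iff' 1).mp ?_
  simp only [sum_range_one, Nat.cast_zero, zero_mul, zero_div, sub_zero]
  refine ((Complex.hasSum_exp z).mul_left z).congr_fun fun n => ?_
  rw [Nat.factorial_succ]
  push_cast
  field_simp
  ring

theorem hasSum_egf_mul {z : ℂ} (ha : Summable fun n => ‖a n * z ^ n / (n ! : ℂ)‖)
    (hb : Summable fun n => ‖b n * z ^ n / (n ! : ℂ)‖) :
    HasSum (fun n => (∑ k ∈ range (n + 1), n.choose k * a k * b (n - k)) * z ^ n / n !)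
      (egf a z * egf b z) := by
  refine (hasSum_sum_range_mul_of_summable_norm ha hb).congr_fun fun n => ?_
  rw [sum_mul, sum_div]
  refine sum_congr rfl fun k hk => ?_
  have hkn : k ≤ n := Nat.lt_succ_iff.mp (mem_range.mp hk)
  obtain ⟨j, rfl⟩ := Nat.exists_eq_add_of_le hkn
  rw [Nat.cast_choose ℂ hkn, Nat.add_sub_cancel_left, pow_add]
  have : ((k + j)! : ℂ) ≠ 0 := mod_cast (k + j).factorial_ne_zero
  field_simp

theorem hasDerivAt_egf (ha : ∀ n, ‖a n‖ ≤ C * R ^ n) (z : ℂ) :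
    HasDerivAt (egf a) (egf (fun n => a (n + 1)) z) z := by
  have ha' : ∀ n, ‖a (n + 1)‖ ≤ C * R * R ^ n := fun n => by
    rw [mul_assoc, ← pow_succ']
    exact ha _
  set r := ‖z‖ + 1
  have hz : z ∈ Metric.ball (0 : ℂ) r := by simp [r]
  have hu : Summable fun n => ‖a n‖ * (n * r ^ (n - 1)) / n ! := by
    refine (summable_nat_add_iff 1).mp
      ((summable_norm_egf_of_norm_le ha' (r : ℂ)).congr fun n => ?_)
    rw [norm_div, norm_mul, norm_pow, Complex.norm_natCast, Complex.norm_real, Real.norm_of_nonneg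
      (by positivity), Nat.add_sub_cancel, Nat.factorial_succ]
    push_cast
    field_simp
  have hderiv := hasDerivAt_tsum_of_isPreconnected hu Metric.isOpen_ball
    (convex_ball (0 : ℂ) r).isPreconnected
    (fun n w _ => ((hasDerivAt_pow n w).const_mul (a n)).div_const (n ! : ℂ))
    (fun n w hw => ?_) hz (hasSum_egf ha z).summable hz
  · have hshift :
        HasSum (fun n => a n * (n * z ^ (n - 1)) / n !) (egf (fun n => a (n + 1)) z) := by
      refine (hasSum_nat_add_iff' 1).mp ?_
      simp only [sum_range_one, Nat.cast_zero, zero_mul, mul_zero, zero_div, sub_zero]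
      refine (hasSum_egf ha' z).congr_fun fun n => ?_
      rw [Nat.add_sub_cancel, Nat.factorial_succ]
      push_cast
      field_simp
    rw [← hshift.tsum_eq]
    exact hderiv
  · rw [norm_div, norm_mul, norm_mul, norm_pow, Complex.norm_natCast, Complex.norm_natCast]
    have : ‖w‖ ≤ r := by simpa using (Metric.mem_ball.mp hw).le
    gcongr

theorem egf_one : egf (fun _ => 1) = Complex.exp :=
  funext fun z => by simpa [egf] using (Complex.hasSum_exp z).tsum_eq

end egf

section recurrence

variable {l d : ℕ → ℝ}

theorem abs_le_four_pow
    (hl : ∀ n : ℕ, l (n + 1) =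
      1 - n * (2 / 2 ^ n) + 2 / 2 ^ n * ∑ k ∈ range (n + 1), (n.choose k : ℝ) * l k + d n)
    (hd : ∀ n, |d n| ≤ 1) (h0 : |l 0| ≤ 1) (n : ℕ) : |l n| ≤ 4 ^ n := by
  induction n using Nat.strong_induction_on with | _ n ih => ?_
  rcases n with _ | n
  · simpa using h0
  have hsum : |∑ k ∈ range (n + 1), (n.choose k : ℝ) * l k| ≤ 5 ^ n := calc
    _ ≤ ∑ k ∈ range (n + 1), (n.choose k : ℝ) * 4 ^ k := by
      refine (abs_sum_le_sum_abs _ _).trans (sum_le_sum fun k hk => ?_)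
      rw [abs_mul, Nat.abs_cast]
      gcongr
      exact ih k (by simpa [Nat.lt_succ_iff] using hk)
    _ = 5 ^ n := by
      rw [show (5 : ℝ) = 4 + 1 by norm_num, add_pow]
      simp [mul_comm]
  have hS : |2 / 2 ^ n * ∑ k ∈ range (n + 1), (n.choose k : ℝ) * l k| ≤ 2 * 4 ^ n := by
    rw [abs_mul, abs_of_pos (by positivity)]
    refine (mul_le_mul_of_nonneg_left hsum (by positivity)).trans ?_
    rw [div_mul_eq_mul_div, div_le_iff₀ (by positivity), mul_assoc, ← mul_pow]
    gcongr
    norm_num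
  have hn : (n : ℝ) * (2 / 2 ^ n) ≤ 2 := by
    rw [mul_div_assoc', div_le_iff₀ (by positivity)]
    have : (n : ℝ) ≤ 2 ^ n := mod_cast Nat.lt_two_pow_self.le
    linarith
  have hn' : 0 ≤ (n : ℝ) * (2 / 2 ^ n) := by positivity
  have h4 : (1 : ℝ) ≤ 4 ^ n := one_le_pow₀ (by norm_num)
  rw [hl, pow_succ, abs_le]
  constructor <;> linarith [abs_le.mp (hd n), abs_le.mp hS]

theorem hasSum_egf_succ {C R C' R' : ℝ}
    (hl : ∀ n : ℕ, l (n + 1) =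
      1 - n * (2 / 2 ^ n) + 2 / 2 ^ n * ∑ k ∈ range (n + 1), (n.choose k : ℝ) * l k + d n)
    (hlC : ∀ n, ‖(l n : ℂ)‖ ≤ C * R ^ n) (hdC : ∀ n, ‖(d n : ℂ)‖ ≤ C' * R' ^ n)
    (z : ℂ) :
    HasSum (fun n => (l (n + 1) : ℂ) * z ^ n / n !)
      (Complex.exp z - z * Complex.exp (z / 2)
        + 2 * Complex.exp (z / 2) * egf (fun n => l n) (z / 2) + egf (fun n => d n) z) := by
  have hone : ∀ n, ‖(1 : ℂ)‖ ≤ 1 * 1 ^ n := by simp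
  have hconv := hasSum_egf_mul (summable_norm_egf_of_norm_le hlC (z / 2))
    (summable_norm_egf_of_norm_le hone (z / 2))
  rw [egf_one] at hconv
  have h := (((Complex.hasSum_exp z).sub
    ((hasSum_nat_mul_pow_div_factorial (z / 2)).mul_left 2)).add (hconv.mul_left 2)).add
    (hasSum_egf hdC z)
  rw [show Complex.exp z - 2 * (z / 2 * Complex.exp (z / 2))
      + 2 * (egf (fun n => l n) (z / 2) * Complex.exp (z / 2))
      = Complex.exp z - z * Complex.exp (z / 2)
        + 2 * Complex.exp (z / 2) * egf (fun n => l n) (z / 2) by ring] at h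
  refine h.congr_fun fun n => ?_
  rw [hl n]
  push_cast
  simp only [mul_one, div_pow]
  field_simp

end recurrence

/-- The amounts by which `l₁, l₂, l₃` miss the recurrence extended to all `n`. -/
noncomputable def recurrenceDefect (n : ℕ) : ℝ :=
  (if n = 0 then -1 else 0) + if n = 2 then 1 / 2 else 0

theorem abs_recurrenceDefect_le (n : ℕ) : |recurrenceDefect n| ≤ 1 := by
  unfold recurrenceDefect
  split_ifs <;> norm_num

theorem egf_recurrenceDefect (z : ℂ) :
    egf (fun n => (recurrenceDefect n : ℂ)) z = -1 + z ^ 2 / 4 := by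
  refine (((hasSum_ite_eq 0 (-1 : ℂ)).add (hasSum_ite_eq 2 (z ^ 2 / 4))).congr_fun
    fun n => ?_).tsum_eq
  rcases n with _ | _ | _ | n <;> simp [recurrenceDefect, Nat.factorial]
  ring

theorem succ_eq_add_recurrenceDefect (l : ℕ → ℝ)
    (h0 : l 0 = 0) (h1 : l 1 = 0) (h2 : l 2 = 0) (h3 : l 3 = 1/2)
    (hrec : ∀ n : ℕ, 3 ≤ n →
      l (n+1) = 1 + (2:ℝ) ^ (1 - (n:ℤ)) * ∑ k ∈ Finset.range (n+1), (n.choose k : ℝ) * l k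
        - (n : ℝ) * (2:ℝ) ^ (1 - (n:ℤ))) (n : ℕ) :
    l (n + 1) = 1 - n * (2 / 2 ^ n) + 2 / 2 ^ n * ∑ k ∈ range (n + 1), (n.choose k : ℝ) * l k
      + recurrenceDefect n := by
  rcases n with _ | _ | _ | n
  · simp [recurrenceDefect, h0, h1]
  · simp [recurrenceDefect, sum_range_succ, h0, h1, h2]
  · norm_num [recurrenceDefect, sum_range_succ, h0, h1, h2, h3]
  · have h2pow : (2 : ℝ) ^ (1 - ((n + 3 : ℕ) : ℤ)) = 2 / 2 ^ (n + 3) := by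
      rw [zpow_sub₀ two_ne_zero, zpow_one, zpow_natCast]
    rw [hrec (n + 3) (by omega), h2pow]
    simp [recurrenceDefect]
    ring

/-- The exponential generating function `L(z) = ∑ l_n z^n/n!` converges everywhere
and the resulting entire function satisfies
`L'(z) = e^z - z e^{z/2} - 1 + z²/4 + 2 e^{z/2} L(z/2)` for all `z ∈ ℂ`. -/
theorem dst_egf_equation
    (l : ℕ → ℝ)
    (h0 : l 0 = 0) (h1 : l 1 = 0) (h2 : l 2 = 0) (h3 : l 3 = 1/2)
    (hrec : ∀ n : ℕ, 3 ≤ n →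
      l (n+1) = 1 + (2:ℝ) ^ (1 - (n:ℤ)) * ∑ k ∈ Finset.range (n+1), (n.choose k : ℝ) * l k
        - (n : ℝ) * (2:ℝ) ^ (1 - (n:ℤ))) :
    ∃ L : ℂ → ℂ,
      (∀ z : ℂ, HasSum (fun n : ℕ => (l n : ℂ) * z ^ n / (n.factorial : ℂ)) (L z)) ∧
      (∀ z : ℂ, HasDerivAt L
        (Complex.exp z - z * Complex.exp (z/2) - 1 + z^2/4
          + 2 * Complex.exp (z/2) * L (z/2)) z) := by
  have hl := succ_eq_add_recurrenceDefect l h0 h1 h2 h3 hrec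
  have hlC : ∀ n, ‖(l n : ℂ)‖ ≤ 1 * 4 ^ n := fun n => by
    simpa using abs_le_four_pow hl abs_recurrenceDefect_le (by simp [h0]) n
  have hdC : ∀ n, ‖(recurrenceDefect n : ℂ)‖ ≤ 1 * 1 ^ n := fun n => by
    simpa using abs_recurrenceDefect_le n
  refine ⟨egf (fun n => l n), hasSum_egf hlC, fun z => ?_⟩
  refine (hasDerivAt_egf hlC z).congr_deriv ?_
  refine (hasSum_egf_succ hl hlC hdC z).tsum_eq.trans ?_
  rw [egf_recurrenceDefect]
  ring
end

section
/- For every integer n ≥ 1, the coefficients m_n of the Poisson generating function satisfy the recurrence m_{n+1} = −(1 − 2^{1-n})·m_n + n·(−1)^n·2^{1-n} − (−1)^n + (n(n−1)/4)·(−1)^n. -/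
/-!
With `Δ` the forward difference of step `1` on `ℕ`, `m n = Δⁿ l 0`, and `Δⁿ` of the shifted
sequence `j ↦ l (j + 1)` at `0` is `m (n + 1) + m n`. Apply `Δⁿ` at `0` to the recurrence, written
for all `j` with point corrections at `j = 0, 2`: constants vanish for `n ≥ 1`, and
`Δⁿ (j ↦ xʲ ∑ₖ C(j,k) a k) 0 = ∑ₖ C(n,k) xᵏ (x - 1)ⁿ⁻ᵏ a k`,
which at `x = 1/2` (where `x - 1 = -x`) is `2⁻ⁿ Δⁿ a 0 = 2⁻ⁿ m n`, and for `a = δ₁` gives the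
difference of `j ↦ j xʲ`.
-/

open Finset fwdDiff fwdDiff_aux

section

variable {M G : Type*} [AddCommMonoid M] [AddCommGroup G] (h : M)

lemma fwdDiff_iter_sub (f g : M → G) (n : ℕ) :
    Δ_[h] ^[n] (f - g) = Δ_[h] ^[n] f - Δ_[h] ^[n] g := by
  simpa [coe_fwdDiffₗ_pow] using map_sub (fwdDiffₗ M G h ^ n) f g

lemma fwdDiff_iter_const_of_ne_zero (c : G) {n : ℕ} (hn : n ≠ 0) :
    Δ_[h] ^[n] (fun _ ↦ c : M → G) = 0 := by
  obtain ⟨k, rfl⟩ := Nat.exists_eq_succ_of_ne_zero hn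
  rw [Function.iterate_succ_apply, fwdDiff_const]
  exact Function.iterate_fixed (fwdDiff_const h 0) k

end

lemma fwdDiff_iter_comp_succ_apply_zero {G : Type*} [AddCommGroup G] (f : ℕ → G) (n : ℕ) :
    Δ_[1] ^[n] (fun j ↦ f (j + 1)) 0 = Δ_[1] ^[n + 1] f 0 + Δ_[1] ^[n] f 0 := by
  rw [fwdDiff_iter_comp_add, Function.iterate_succ_apply', fwdDiff, zero_add, sub_add_cancel]

section

variable {R : Type*} [CommRing R]

lemma fwdDiff_iter_apply_zero (f : ℕ → R) (n : ℕ) :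
    Δ_[1] ^[n] f 0 = ∑ k ∈ range (n + 1), (n.choose k : R) * (-1) ^ (n - k) * f k := by
  rw [fwdDiff_iter_eq_sum_shift]
  refine sum_congr rfl fun k _ ↦ ?_
  simp [zsmul_eq_mul, mul_comm]

lemma choose_mul_neg_one_pow_sub (n k : ℕ) :
    (n.choose k : R) * (-1) ^ (n - k) = n.choose k * (-1) ^ (n + k) := by
  rcases le_or_gt k n with hkn | hkn
  · rw [show n + k = n - k + 2 * k by omega, pow_add, pow_mul, neg_one_sq, one_pow, mul_one]
  · simp [Nat.choose_eq_zero_of_lt hkn]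

lemma fwdDiff_iter_ite_eq_apply_zero (i n : ℕ) (c : R) :
    Δ_[1] ^[n] (fun j ↦ if j = i then c else 0) 0 = n.choose i * (-1) ^ (n + i) * c := by
  rw [fwdDiff_iter_apply_zero, ← choose_mul_neg_one_pow_sub]
  simp only [mul_ite, mul_zero, sum_ite_eq', mem_range]
  split_ifs with hi
  · rfl
  · simp [Nat.choose_eq_zero_of_lt (by omega : n < i)]

lemma sum_choose_mul_choose_mul_pow_mul_pow {n k : ℕ} (hkn : k ≤ n) (x y : R) :
    ∑ j ∈ range (n + 1), (n.choose j : R) * j.choose k * x ^ j * y ^ (n - j)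
      = n.choose k * x ^ k * (x + y) ^ (n - k) := by
  have hlow : ∑ j ∈ range k, (n.choose j : R) * j.choose k * x ^ j * y ^ (n - j) = 0 :=
    sum_eq_zero fun j hj ↦ by simp [Nat.choose_eq_zero_of_lt (mem_range.mp hj)]
  rw [show n + 1 = k + (n - k + 1) by omega, sum_range_add, hlow, zero_add, add_pow, mul_sum]
  refine sum_congr rfl fun i _ ↦ ?_
  have hchoose : (n.choose (k + i) : R) * (k + i).choose k = n.choose k * (n - k).choose i := by
    have := Nat.choose_mul (n := n) (Nat.le_add_right k i)
    rw [Nat.add_sub_cancel_left] at this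
    exact_mod_cast congrArg (Nat.cast (R := R)) this
  rw [← Nat.sub_sub, pow_add]
  linear_combination (x ^ k * x ^ i * y ^ (n - k - i)) * hchoose

lemma fwdDiff_iter_pow_mul_sum_choose_apply_zero (x : R) (a : ℕ → R) (n : ℕ) :
    Δ_[1] ^[n] (fun j ↦ x ^ j * ∑ k ∈ range (j + 1), (j.choose k : R) * a k) 0
      = ∑ k ∈ range (n + 1), (n.choose k : R) * x ^ k * (x - 1) ^ (n - k) * a k := by
  have hextend : ∀ j ∈ range (n + 1), ∑ k ∈ range (j + 1), (j.choose k : R) * a k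
      = ∑ k ∈ range (n + 1), (j.choose k : R) * a k := fun j hj ↦
    sum_subset (range_subset_range.mpr (mem_range.mp hj)) fun k _ hk ↦ by
      simp [Nat.choose_eq_zero_of_lt (not_lt.mp (mt mem_range.mpr hk))]
  rw [fwdDiff_iter_apply_zero]
  calc ∑ j ∈ range (n + 1), (n.choose j : R) * (-1) ^ (n - j)
          * (x ^ j * ∑ k ∈ range (j + 1), (j.choose k : R) * a k)
      = ∑ j ∈ range (n + 1), ∑ k ∈ range (n + 1),
          (n.choose j : R) * j.choose k * x ^ j * (-1) ^ (n - j) * a k := by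
        refine sum_congr rfl fun j hj ↦ ?_
        rw [hextend j hj, mul_sum, mul_sum]
        exact sum_congr rfl fun k _ ↦ by ring
    _ = ∑ k ∈ range (n + 1), (n.choose k : R) * x ^ k * (x - 1) ^ (n - k) * a k := by
        rw [sum_comm]
        refine sum_congr rfl fun k hk ↦ ?_
        rw [← sum_mul, sum_choose_mul_choose_mul_pow_mul_pow (Nat.lt_succ_iff.mp (mem_range.mp hk)),
          ← sub_eq_add_neg]

lemma fwdDiff_iter_mul_pow_apply_zero (x : R) (n : ℕ) :
    Δ_[1] ^[n] (fun j : ℕ ↦ (j : R) * x ^ j) 0 = (n : R) * x * (x - 1) ^ (n - 1) := by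
  have hj : (fun j : ℕ ↦ (j : R) * x ^ j)
      = fun j ↦ x ^ j * ∑ k ∈ range (j + 1), (j.choose k : R) * if k = 1 then 1 else 0 := by
    funext j
    rcases j with _ | j <;> simp [mul_comm]
  rw [hj, fwdDiff_iter_pow_mul_sum_choose_apply_zero]
  rcases n with _ | n <;> simp

end

lemma fwdDiff_iter_inv_two_pow_mul_sum_choose_apply_zero {K : Type*} [Field K] [NeZero (2 : K)]
    (a : ℕ → K) (n : ℕ) :
    Δ_[1] ^[n] (fun j ↦ 2⁻¹ ^ j * ∑ k ∈ range (j + 1), (j.choose k : K) * a k) 0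
      = 2⁻¹ ^ n * Δ_[1] ^[n] a 0 := by
  rw [fwdDiff_iter_pow_mul_sum_choose_apply_zero, fwdDiff_iter_apply_zero, mul_sum,
    show (2⁻¹ - 1 : K) = -1 * 2⁻¹ by field_simp; norm_num]
  refine sum_congr rfl fun k hk ↦ ?_
  rw [mul_pow, ← pow_mul_pow_sub (2⁻¹ : K) (Nat.lt_succ_iff.mp (mem_range.mp hk))]
  ring

/-- The Taylor coefficients `m_n` of the Poisson generating function satisfy, for `n ≥ 1`,
`m_{n+1} = -(1-2^{1-n}) m_n + n(-1)^n 2^{1-n} - (-1)^n + (n(n-1)/4)(-1)^n`. -/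
theorem dst_poisson_coeff_recurrence
    (l : ℕ → ℝ)
    (h0 : l 0 = 0) (h1 : l 1 = 0) (h2 : l 2 = 0) (h3 : l 3 = 1/2)
    (hrec : ∀ n : ℕ, 3 ≤ n →
      l (n+1) = 1 + (2:ℝ) ^ (1 - (n:ℤ)) * ∑ k ∈ Finset.range (n+1), (n.choose k : ℝ) * l k
        - (n : ℝ) * (2:ℝ) ^ (1 - (n:ℤ)))
    (m : ℕ → ℝ)
    (hm : ∀ n : ℕ, m n = ∑ k ∈ Finset.range (n+1), (n.choose k : ℝ) * (-1)^(n-k) * l k) :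
    ∀ n : ℕ, 1 ≤ n →
      m (n+1) = -(1 - (2:ℝ) ^ (1 - (n:ℤ))) * m n + (n:ℝ) * (-1)^n * (2:ℝ) ^ (1 - (n:ℤ))
        - (-1)^n + ((n:ℝ) * ((n:ℝ) - 1) / 4) * (-1)^n := by
  intro n hn
  have hm_eq : m = fun n ↦ Δ_[1] ^[n] l 0 := funext fun n ↦ by rw [hm, fwdDiff_iter_apply_zero]
  -- the recurrence, extended to all `j`, is off by `-1` at `j = 0` and by `1/2` at `j = 2`
  have hl : (fun j ↦ l (j + 1)) = (fun _ ↦ (1 : ℝ))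
      + (2 : ℝ) • (fun j ↦ 2⁻¹ ^ j * ∑ k ∈ range (j + 1), (j.choose k : ℝ) * l k)
      - (2 : ℝ) • (fun j : ℕ ↦ (j : ℝ) * 2⁻¹ ^ j)
      + ((fun j ↦ if j = 2 then 2⁻¹ else 0) - fun j ↦ if j = 0 then 1 else 0) := by
    funext j
    rcases lt_or_ge j 3 with hj | hj
    · interval_cases j <;> norm_num [h0, h1, h2, h3, sum_range_succ]
    · simp only [Pi.add_apply, Pi.sub_apply, Pi.smul_apply, smul_eq_mul]
      rw [if_neg (by omega), if_neg (by omega), hrec j hj, zpow_one_sub_natCast₀ two_ne_zero,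
        div_eq_mul_inv, ← inv_pow]
      ring
  have hshift := fwdDiff_iter_comp_succ_apply_zero l n
  rw [hl] at hshift
  simp only [fwdDiff_iter_add, fwdDiff_iter_sub, fwdDiff_iter_const_smul, Pi.add_apply,
    Pi.sub_apply, Pi.smul_apply, smul_eq_mul, Pi.zero_apply,
    fwdDiff_iter_const_of_ne_zero _ _ (by omega : n ≠ 0),
    fwdDiff_iter_inv_two_pow_mul_sum_choose_apply_zero, fwdDiff_iter_mul_pow_apply_zero,
    fwdDiff_iter_ite_eq_apply_zero] at hshift
  rw [hm_eq, zpow_one_sub_natCast₀ two_ne_zero, div_eq_mul_inv, ← inv_pow]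
  obtain ⟨p, rfl⟩ : ∃ p, n = p + 1 := ⟨n - 1, by omega⟩
  rw [Nat.cast_choose_two, Nat.choose_zero_right, show (2⁻¹ - 1 : ℝ) = -1 * 2⁻¹ by norm_num,
    mul_pow] at hshift
  push_cast at hshift ⊢
  linear_combination -hshift
end
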